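/- The infinite series ∑_{n=1}^∞ H_n² / ((n+1)(n+2)) equals 1 + ζ(2). -/

import Mathlib

/-- Generalized harmonic number `H_n^{(r)} = ∑_{j=1}^n 1/j^r`. -/
noncomputable def H (n r : ℕ) : ℝ := ∑ j ∈ Finset.range n, (1 : ℝ) / (j + 1) ^ r

/-- Riemann zeta value `ζ(s) = ∑_{n=1}^∞ 1/n^s` (as a real series). -/
noncomputable def Z (s : ℕ) : ℝ := ∑' n : ℕ, (1 : ℝ) / (n + 1) ^ s

/-- Double zeta value `ζ(a,b) = ∑_{m>n≥1} 1/(m^a n^b)`. -/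
noncomputable def Z2 (a b : ℕ) : ℝ :=
  ∑' m : ℕ, (∑ j ∈ Finset.range m, (1 : ℝ) / (j + 1) ^ b) / (m + 1) ^ a

lemma H_eq_harmonic (n : ℕ) : H n 1 = (harmonic n : ℝ) := by
  simp [H, harmonic, one_div]

lemma H_nonneg (n : ℕ) : 0 ≤ H n 1 := by
  apply Finset.sum_nonneg
  intro j _
  positivity

lemma H_le_log (n : ℕ) : H n 1 ≤ 1 + Real.log n := by
  rw [H_eq_harmonic]
  exact harmonic_le_one_add_log n

lemma key (N : ℕ) :
    ∑ n ∈ Finset.range N, H (n + 1) 1 ^ 2 / (((n : ℝ) + 2) * ((n : ℝ) + 3)) =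
      2 + ∑ n ∈ Finset.range N, (1 : ℝ) / ((n : ℝ) + 2) ^ 2
        - (H (N + 1) 1 + 1) ^ 2 / ((N : ℝ) + 2) := by
  induction N with
  | zero => simp [H]; norm_num
  | succ N ih =>
      rw [Finset.sum_range_succ, ih, Finset.sum_range_succ]
      have hH : H (N + 1 + 1) 1 = H (N + 1) 1 + 1 / ((N : ℝ) + 2) := by
        simp [H, Finset.sum_range_succ]
        ring
      rw [hH]
      push_cast
      have h2 : ((N : ℝ) + 2) ≠ 0 := by positivity
      have h3 : ((N : ℝ) + 3) ≠ 0 := by positivity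
      field_simp
      ring

lemma tendsto_aux :
    Filter.Tendsto (fun N : ℕ => (H (N + 1) 1 + 1) ^ 2 / ((N : ℝ) + 2))
      Filter.atTop (nhds 0) := by
  have hlim : Filter.Tendsto (fun x : ℝ => (2 + Real.log x) ^ 2 / (x + 1))
      Filter.atTop (nhds 0) := by
    have h1 := Real.tendsto_pow_log_div_mul_add_atTop 1 1 1 one_ne_zero
    have h2 := Real.tendsto_pow_log_div_mul_add_atTop 1 1 2 one_ne_zero
    have h3 : Filter.Tendsto (fun x : ℝ => 1 / (x + 1)) Filter.atTop (nhds 0) := by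
      simp only [one_div]
      exact tendsto_inv_atTop_zero.comp
        (Filter.tendsto_atTop_add_const_right _ 1 Filter.tendsto_id)
    have h := ((h3.const_mul 4).add (h1.const_mul 4)).add h2
    simp only [mul_zero, add_zero, zero_add] at h
    apply h.congr'
    filter_upwards [Filter.eventually_ge_atTop (1 : ℝ)] with x hx
    have hx1 : x + 1 ≠ 0 := by positivity
    field_simp
    ring
  have hcomp : Filter.Tendsto (fun N : ℕ => ((N : ℝ) + 1)) Filter.atTop Filter.atTop :=
    Filter.tendsto_atTop_add_const_right _ 1 tendsto_natCast_atTop_atTop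
  have hup := hlim.comp hcomp
  apply squeeze_zero (fun N => by positivity) ?_ hup
  intro N
  simp only [Function.comp_apply]
  have hlog : (0 : ℝ) ≤ Real.log ((N : ℝ) + 1) := by
    apply Real.log_nonneg; linarith [Nat.cast_nonneg (α := ℝ) N]
  have hb : H (N + 1) 1 + 1 ≤ 2 + Real.log ((N : ℝ) + 1) := by
    have := H_le_log (N + 1)
    push_cast at this
    linarith
  have ha : 0 ≤ H (N + 1) 1 + 1 := by linarith [H_nonneg (N + 1)]
  have hnum : (H (N + 1) 1 + 1) ^ 2 ≤ (2 + Real.log ((N : ℝ) + 1)) ^ 2 := by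
    exact pow_le_pow_left₀ ha hb 2
  have hden : ((N : ℝ) + 1) + 1 = ((N : ℝ) + 2) := by ring
  rw [hden]
  gcongr

theorem stmt6 :
    ∑' n : ℕ, H (n + 1) 1 ^ 2 / (((n : ℝ) + 2) * ((n : ℝ) + 3)) = 1 + Z 2 := by
  have hs2 : Summable (fun n : ℕ => 1 / ((n : ℝ)) ^ 2) :=
    Real.summable_one_div_nat_pow.2 one_lt_two
  have hs1 : Summable (fun n : ℕ => 1 / ((n : ℝ) + 1) ^ 2) := by
    have := (summable_nat_add_iff 1).2 hs2
    apply this.congr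
    intro n; push_cast; ring_nf
  have hZ : HasSum (fun n : ℕ => 1 / ((n : ℝ) + 1) ^ 2) (Z 2) := by
    simpa [Z] using hs1.hasSum
  have hshift : HasSum (fun n : ℕ => 1 / ((n : ℝ) + 2) ^ 2) (Z 2 - 1) := by
    have hZ' : HasSum (fun n : ℕ => 1 / ((n : ℝ) + 1) ^ 2)
        (Z 2 - 1 + ∑ i ∈ Finset.range 1, 1 / ((i : ℝ) + 1) ^ 2) := by
      convert hZ using 1
      norm_num
    have h := (hasSum_nat_add_iff (f := fun n : ℕ => 1 / ((n : ℝ) + 1) ^ 2) 1).mpr hZ'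
    convert h using 2 with n
    · rfl
    push_cast
    ring
  have hnonneg : ∀ n : ℕ, 0 ≤ H (n + 1) 1 ^ 2 / (((n : ℝ) + 2) * ((n : ℝ) + 3)) := by
    intro n; positivity
  have hkey : Filter.Tendsto
      (fun N : ℕ => ∑ n ∈ Finset.range N,
        H (n + 1) 1 ^ 2 / (((n : ℝ) + 2) * ((n : ℝ) + 3)))
      Filter.atTop (nhds (1 + Z 2)) := by
    have hA := hshift.tendsto_sum_nat
    have h := ((tendsto_const_nhds (x := (2 : ℝ)) (f := Filter.atTop (α := ℕ))).add hA).sub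
      tendsto_aux
    have hval : 2 + (Z 2 - 1) - 0 = 1 + Z 2 := by ring
    rw [hval] at h
    exact h.congr (fun N => (key N).symm)
  exact ((hasSum_iff_tendsto_nat_of_nonneg hnonneg _).mpr hkey).tsum_eq
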